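/- Let u^a ∈ R^{2M+1} (M ≥ N+2) and define the truncation error t ∈ R^{2N+1} by t_{-N} = t_N = 0 and t_j = (L^{qcf} u^a − L^a u^a)_j for j = −N+1,...,N−1. Then t_j = 0 for j in the atomistic region A, and t_j = ε^2 φ''_{2F} (u^a_{j+2} − 4u^a_{j+1} + 6u^a_j − 4u^a_{j-1} + u^a_{j-2})/ε^4 for j in the continuum region C. Consequently, for every p ∈ [1,∞], ‖t‖_{ℓ^p_ε} = ε^2 |φ''_{2F}| ‖D̄^4 u^a‖_{ℓ^p_ε(C)}. -/
import Mathlib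


noncomputable def eps (N : ℤ) : ℝ := 1 / (N : ℝ)

/-- Linearized atomistic operator. -/
noncomputable def Laop (N : ℤ) (φF φ2F : ℝ) (v : ℤ → ℝ) (j : ℤ) : ℝ :=
  φF * ((-v (j+1) + 2 * v j - v (j-1)) / (eps N)^2) +
  φ2F * ((-v (j+2) + 2 * v j - v (j-2)) / (eps N)^2)

/-- Linearized force-based QC operator: atomistic on `A = {-K,…,K}`, local
continuum model on `C`. -/
noncomputable def LqcfOp (N K : ℤ) (φF φ2F : ℝ) (v : ℤ → ℝ) (j : ℤ) : ℝ :=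
  if -K ≤ j ∧ j ≤ K then Laop N φF φ2F v j
  else (φF + 4 * φ2F) * ((-v (j+1) + 2 * v j - v (j-1)) / (eps N)^2)

/-- Truncation error `t = L^{qcf}u^a - L^a u^a` (zero at the boundary). -/
noncomputable def truncErr (N K : ℤ) (φF φ2F : ℝ) (u : ℤ → ℝ) (j : ℤ) : ℝ :=
  if -N+1 ≤ j ∧ j ≤ N-1 then LqcfOp N K φF φ2F u j - Laop N φF φ2F u j else 0

/-- Fourth centered divided difference `(D̄⁴u)_j`. -/
noncomputable def D4bar (N : ℤ) (u : ℤ → ℝ) (j : ℤ) : ℝ :=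
  (u (j+2) - 4 * u (j+1) + 6 * u j - 4 * u (j-1) + u (j-2)) / (eps N)^4

/-- Pointwise consistency of the QCF approximation: the truncation error vanishes
in the atomistic region, equals `ε² φ''_{2F} (D̄⁴u^a)_j` in the continuum region,
and hence `‖t‖_{ℓ^p_ε} = ε² |φ''_{2F}| ‖D̄⁴u^a‖_{ℓ^p_ε(C)}` for all `1 ≤ p ≤ ∞`. -/
theorem qcf_truncation_error (N K : ℤ) (hN : 1 ≤ N) (hK : 2 ≤ K) (hKN : 2 * K ≤ N)
    (φF φ2F : ℝ)
    (hneAll : (Finset.Icc (-N) N).Nonempty)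
    (hneC : ((Finset.Icc (-N+1) (N-1)) \ (Finset.Icc (-K) K)).Nonempty)
    (u : ℤ → ℝ) :
    (∀ j ∈ Finset.Icc (-K) K, truncErr N K φF φ2F u j = 0) ∧
    (∀ j ∈ (Finset.Icc (-N+1) (N-1)) \ (Finset.Icc (-K) K),
      truncErr N K φF φ2F u j = (eps N)^2 * φ2F * D4bar N u j) ∧
    (∀ p : ℝ, 1 ≤ p →
      (eps N * ∑ j ∈ Finset.Icc (-N) N, |truncErr N K φF φ2F u j| ^ p) ^ (1/p) =
        (eps N)^2 * |φ2F| *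
          (eps N * ∑ j ∈ (Finset.Icc (-N+1) (N-1)) \ (Finset.Icc (-K) K),
            |D4bar N u j| ^ p) ^ (1/p)) ∧
    ((Finset.Icc (-N) N).sup' hneAll (fun j => |truncErr N K φF φ2F u j|) =
      (eps N)^2 * |φ2F| *
        ((Finset.Icc (-N+1) (N-1)) \ (Finset.Icc (-K) K)).sup' hneC
          (fun j => |D4bar N u j|)) := by
  have hN' : (1:ℝ) ≤ (N:ℝ) := by exact_mod_cast hN
  have hεpos : 0 < eps N := by
    unfold eps; exact one_div_pos.mpr (by linarith)
  have hεne : eps N ≠ 0 := ne_of_gt hεpos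
  set C := (Finset.Icc (-N+1) (N-1)) \ (Finset.Icc (-K) K) with hCdef
  have hA : ∀ j ∈ Finset.Icc (-K) K, truncErr N K φF φ2F u j = 0 := by
    intro j hj
    simp only [Finset.mem_Icc] at hj
    unfold truncErr LqcfOp
    rw [if_pos (by omega : -N+1 ≤ j ∧ j ≤ N-1), if_pos hj]
    ring
  have hCval : ∀ j ∈ C, truncErr N K φF φ2F u j = (eps N)^2 * φ2F * D4bar N u j := by
    intro j hj
    simp only [hCdef, Finset.mem_sdiff, Finset.mem_Icc] at hj
    unfold truncErr LqcfOp Laop D4bar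
    rw [if_pos hj.1, if_neg hj.2]
    field_simp
    ring
  set c := (eps N)^2 * |φ2F| with hcdef
  have hc : 0 ≤ c := by positivity
  have hsub : C ⊆ Finset.Icc (-N) N := by
    intro j hj
    simp only [hCdef, Finset.mem_sdiff, Finset.mem_Icc] at hj ⊢
    omega
  have hzero : ∀ j ∈ Finset.Icc (-N) N, j ∉ C → truncErr N K φF φ2F u j = 0 := by
    intro j hj hjC
    simp only [hCdef, Finset.mem_sdiff, Finset.mem_Icc, not_and_or, not_le, not_lt] at hj hjC
    rcases hjC with h | h
    · rcases h with h | h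
      · unfold truncErr; rw [if_neg (by omega)]
      · unfold truncErr; rw [if_neg (by omega)]
    · push_neg at h
      exact hA j (Finset.mem_Icc.mpr (by omega))
  have habs : ∀ j ∈ C, |truncErr N K φF φ2F u j| = c * |D4bar N u j| := by
    intro j hj
    rw [hCval j hj, hcdef, abs_mul, abs_mul, abs_pow, abs_of_pos hεpos]
  refine ⟨hA, hCval, ?_, ?_⟩
  · intro p hp
    have hp0 : p ≠ 0 := by linarith
    have hsum : ∑ j ∈ Finset.Icc (-N) N, |truncErr N K φF φ2F u j| ^ p
        = ∑ j ∈ C, |truncErr N K φF φ2F u j| ^ p := by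
      rw [← Finset.sum_subset hsub]
      intro j hj hjC
      rw [hzero j hj hjC, abs_zero, Real.zero_rpow hp0]
    rw [hsum]
    have hsum2 : ∑ j ∈ C, |truncErr N K φF φ2F u j| ^ p
        = c ^ p * ∑ j ∈ C, |D4bar N u j| ^ p := by
      rw [Finset.mul_sum]
      apply Finset.sum_congr rfl
      intro j hj
      rw [habs j hj, Real.mul_rpow hc (abs_nonneg _)]
    rw [hsum2, mul_left_comm]
    have hS : 0 ≤ eps N * ∑ j ∈ C, |D4bar N u j| ^ p := by
      apply mul_nonneg hεpos.le
      exact Finset.sum_nonneg fun j _ => Real.rpow_nonneg (abs_nonneg _) _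
    rw [Real.mul_rpow (Real.rpow_nonneg hc _) hS, ← Real.rpow_mul hc,
      mul_one_div_cancel hp0, Real.rpow_one]
  · have h1 : (Finset.Icc (-N) N).sup' hneAll (fun j => |truncErr N K φF φ2F u j|)
        = C.sup' hneC (fun j => |truncErr N K φF φ2F u j|) := by
      apply le_antisymm
      · apply Finset.sup'_le
        intro j hj
        by_cases hjC : j ∈ C
        · exact Finset.le_sup' (fun j => |truncErr N K φF φ2F u j|) hjC
        · rw [hzero j hj hjC, abs_zero]
          obtain ⟨j0, hj0⟩ := hneC
          exact le_trans (abs_nonneg _) (Finset.le_sup' (fun j => |truncErr N K φF φ2F u j|) hj0)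
      · exact Finset.sup'_le _ _ fun j hj => Finset.le_sup' (fun j => |truncErr N K φF φ2F u j|) (hsub hj)
    rw [h1, Finset.sup'_congr hneC rfl habs]
    exact (Finset.comp_sup'_eq_sup'_comp hneC (fun x => c * x)
      (fun a b => mul_max_of_nonneg a b hc)).symm
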